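/- AP(k) is nondecreasing in s: if s ≤ s' ≤ N, then the probability that a uniform random s-subset meets a fixed g-subset in at least k elements is at most the corresponding probability for a uniform random s'-subset. -/

import Mathlib

open Finset

/-- Key combinatorial inequality: `(N-s) * T_s ≤ (s+1) * T_{s+1}` where `T_s` is the
unnormalized hypergeometric tail. -/
private lemma tail_step (N g k s : ℕ) (hg : g ≤ N) (hs : s < N) :
    (N - s) * ∑ i ∈ Icc k (min g s), g.choose i * (N - g).choose (s - i) ≤
      (s + 1) * ∑ i ∈ Icc k (min g (s + 1)), g.choose i * (N - g).choose (s + 1 - i) := by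
  set A := Icc k (min g s) with hA
  set A' := Icc k (min g (s + 1)) with hA'
  -- Step 1: termwise lower bound for the RHS
  have step1 : ∑ i ∈ A', (i * (g.choose i * (N - g).choose (s + 1 - i))
        + if i ≤ s then ((N - s) - (g - i)) * (g.choose i * (N - g).choose (s - i)) else 0)
      ≤ (s + 1) * ∑ i ∈ A', g.choose i * (N - g).choose (s + 1 - i) := by
    rw [Finset.mul_sum]
    apply Finset.sum_le_sum
    intro i hi
    rw [hA', mem_Icc] at hi
    have hig : i ≤ g := le_trans hi.2 (min_le_left _ _)
    have his1 : i ≤ s + 1 := le_trans hi.2 (min_le_right _ _)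
    by_cases his : i ≤ s
    · rw [if_pos his]
      have h1 : s + 1 - i = (s - i) + 1 := by omega
      have h2 : (N - g).choose ((s - i) + 1) * ((s - i) + 1)
          = (N - g).choose (s - i) * ((N - g) - (s - i)) := Nat.choose_succ_right_eq _ _
      have h3 : (N - g) - (s - i) = (N - s) - (g - i) := by omega
      have key : (s + 1) * (N - g).choose (s + 1 - i)
          = i * (N - g).choose (s + 1 - i)
            + (N - g).choose (s - i) * ((N - s) - (g - i)) := by
        rw [h1]
        have hsplit : s + 1 = i + ((s - i) + 1) := by omega
        calc (s + 1) * (N - g).choose ((s - i) + 1)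
            = i * (N - g).choose ((s - i) + 1)
              + (N - g).choose ((s - i) + 1) * ((s - i) + 1) := by
                rw [mul_comm ((N - g).choose ((s - i) + 1)) ((s - i) + 1)]
                rw [← add_mul]; rw [← hsplit]
          _ = i * (N - g).choose ((s - i) + 1)
              + (N - g).choose (s - i) * ((N - s) - (g - i)) := by rw [h2, h3]
      apply le_of_eq
      calc i * (g.choose i * (N - g).choose (s + 1 - i))
            + ((N - s) - (g - i)) * (g.choose i * (N - g).choose (s - i))
          = g.choose i * (i * (N - g).choose (s + 1 - i)
              + (N - g).choose (s - i) * ((N - s) - (g - i))) := by ring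
        _ = g.choose i * ((s + 1) * (N - g).choose (s + 1 - i)) := by rw [← key]
        _ = (s + 1) * (g.choose i * (N - g).choose (s + 1 - i)) := by ring
    · rw [if_neg his, add_zero]
      exact Nat.mul_le_mul_right _ his1
  -- Step 2: the `ite` sum equals the sum over `A`
  have step2 : ∑ i ∈ A', (if i ≤ s then ((N - s) - (g - i)) * (g.choose i * (N - g).choose (s - i)) else 0)
      = ∑ i ∈ A, ((N - s) - (g - i)) * (g.choose i * (N - g).choose (s - i)) := by
    rw [← Finset.sum_filter]
    congr 1
    ext x
    simp only [mem_filter, hA, hA', mem_Icc]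
    omega
  -- Step 3: the shifted sum dominates the `(g-j)` weighted sum
  have step3 : ∑ j ∈ A, (g - j) * (g.choose j * (N - g).choose (s - j))
      ≤ ∑ i ∈ A', i * (g.choose i * (N - g).choose (s + 1 - i)) := by
    have hfil : ∑ j ∈ A, (g - j) * (g.choose j * (N - g).choose (s - j))
        = ∑ j ∈ A.filter (· < g), (g - j) * (g.choose j * (N - g).choose (s - j)) := by
      rw [Finset.sum_filter_of_ne]
      intro j hj hne
      rw [hA, mem_Icc] at hj
      by_contra hlt
      have : g - j = 0 := by omega
      simp [this] at hne
    rw [hfil]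
    have himg : ∑ j ∈ A.filter (· < g), (g - j) * (g.choose j * (N - g).choose (s - j))
        = ∑ i ∈ (A.filter (· < g)).image (· + 1),
            i * (g.choose i * (N - g).choose (s + 1 - i)) := by
      rw [Finset.sum_image (by intro a _ b _ h; simp only at h; omega)]
      apply Finset.sum_congr rfl
      intro j hj
      have hsub : s + 1 - (j + 1) = s - j := by omega
      rw [hsub]
      calc (g - j) * (g.choose j * (N - g).choose (s - j))
          = (g.choose j * (g - j)) * (N - g).choose (s - j) := by ring
        _ = (g.choose (j + 1) * (j + 1)) * (N - g).choose (s - j) := by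
            rw [Nat.choose_succ_right_eq]
        _ = (j + 1) * (g.choose (j + 1) * (N - g).choose (s - j)) := by ring
    rw [himg]
    apply Finset.sum_le_sum_of_subset
    intro i hi
    simp only [mem_image, mem_filter, hA, mem_Icc] at hi
    obtain ⟨j, ⟨⟨hkj, hjm⟩, hjg⟩, rfl⟩ := hi
    rw [hA', mem_Icc]
    omega
  -- Step 4: combine
  have step4 : (N - s) * ∑ i ∈ A, g.choose i * (N - g).choose (s - i)
      ≤ ∑ j ∈ A, ((N - s) - (g - j)) * (g.choose j * (N - g).choose (s - j))
        + ∑ j ∈ A, (g - j) * (g.choose j * (N - g).choose (s - j)) := by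
    rw [← Finset.sum_add_distrib, Finset.mul_sum]
    apply Finset.sum_le_sum
    intro j hj
    rw [hA, mem_Icc] at hj
    have hjs : j ≤ s := le_trans hj.2 (min_le_right _ _)
    have hjg : j ≤ g := le_trans hj.2 (min_le_left _ _)
    rw [← add_mul]
    by_cases hc : g - j ≤ N - s
    · have : (N - s) - (g - j) + (g - j) = N - s := by omega
      rw [this]
    · have hzero : (N - g).choose (s - j) = 0 := by
        apply Nat.choose_eq_zero_of_lt
        omega
      simp [hzero]
  calc (N - s) * ∑ i ∈ A, g.choose i * (N - g).choose (s - i)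
      ≤ ∑ j ∈ A, ((N - s) - (g - j)) * (g.choose j * (N - g).choose (s - j))
        + ∑ j ∈ A, (g - j) * (g.choose j * (N - g).choose (s - j)) := step4
    _ ≤ ∑ j ∈ A, ((N - s) - (g - j)) * (g.choose j * (N - g).choose (s - j))
        + ∑ i ∈ A', i * (g.choose i * (N - g).choose (s + 1 - i)) := by
        exact Nat.add_le_add_left step3 _
    _ = ∑ i ∈ A', (i * (g.choose i * (N - g).choose (s + 1 - i))
        + if i ≤ s then ((N - s) - (g - i)) * (g.choose i * (N - g).choose (s - i)) else 0) := by
        rw [Finset.sum_add_distrib, step2, add_comm]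
    _ ≤ (s + 1) * ∑ i ∈ A', g.choose i * (N - g).choose (s + 1 - i) := step1

/-- Cross-multiplied form. -/
private lemma tail_cross (N g k s : ℕ) (hg : g ≤ N) (hs : s < N) :
    (∑ i ∈ Icc k (min g s), g.choose i * (N - g).choose (s - i)) * N.choose (s + 1) ≤
      (∑ i ∈ Icc k (min g (s + 1)), g.choose i * (N - g).choose (s + 1 - i)) * N.choose s := by
  have h1 := tail_step N g k s hg hs
  have h2 : N.choose (s + 1) * (s + 1) = N.choose s * (N - s) := Nat.choose_succ_right_eq N s
  apply Nat.le_of_mul_le_mul_right _ (show 0 < s + 1 by omega)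
  calc (∑ i ∈ Icc k (min g s), g.choose i * (N - g).choose (s - i)) * N.choose (s + 1) * (s + 1)
      = (∑ i ∈ Icc k (min g s), g.choose i * (N - g).choose (s - i))
          * (N.choose (s + 1) * (s + 1)) := by ring
    _ = N.choose s * ((N - s) * ∑ i ∈ Icc k (min g s), g.choose i * (N - g).choose (s - i)) := by
        rw [h2]; ring
    _ ≤ N.choose s * ((s + 1) * ∑ i ∈ Icc k (min g (s + 1)),
          g.choose i * (N - g).choose (s + 1 - i)) := Nat.mul_le_mul_left _ h1
    _ = (∑ i ∈ Icc k (min g (s + 1)), g.choose i * (N - g).choose (s + 1 - i))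
          * N.choose s * (s + 1) := by ring

/-- Single step in ℝ. -/
private lemma prob_step (N g k s : ℕ) (hg : g ≤ N) (hs : s < N) :
    ∑ i ∈ Icc k (min g s),
        ((g.choose i : ℝ) * ((N - g).choose (s - i) : ℝ)) / (N.choose s : ℝ) ≤
      ∑ i ∈ Icc k (min g (s + 1)),
        ((g.choose i : ℝ) * ((N - g).choose (s + 1 - i) : ℝ)) / (N.choose (s + 1) : ℝ) := by
  have hb : (0 : ℝ) < N.choose s := by
    exact_mod_cast Nat.choose_pos (le_of_lt hs)
  have hb' : (0 : ℝ) < N.choose (s + 1) := by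
    exact_mod_cast Nat.choose_pos hs
  rw [← Finset.sum_div, ← Finset.sum_div, div_le_div_iff₀ hb hb']
  exact_mod_cast tail_cross N g k s hg hs

/-- The alignment probability `AP(k)` is nondecreasing in `s`. -/
theorem stmt6 (N g s s' k : ℕ) (hg : g ≤ N) (hss' : s ≤ s') (hs' : s' ≤ N) :
    ∑ i ∈ Finset.Icc k (min g s),
        ((g.choose i : ℝ) * ((N - g).choose (s - i) : ℝ)) / (N.choose s : ℝ) ≤
      ∑ i ∈ Finset.Icc k (min g s'),
        ((g.choose i : ℝ) * ((N - g).choose (s' - i) : ℝ)) / (N.choose s' : ℝ) := by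
  induction s', hss' using Nat.le_induction with
  | base => exact le_rfl
  | succ n hn ih =>
    have hnN : n < N := hs'
    calc ∑ i ∈ Finset.Icc k (min g s),
          ((g.choose i : ℝ) * ((N - g).choose (s - i) : ℝ)) / (N.choose s : ℝ)
        ≤ ∑ i ∈ Finset.Icc k (min g n),
          ((g.choose i : ℝ) * ((N - g).choose (n - i) : ℝ)) / (N.choose n : ℝ) :=
          ih (le_of_lt hnN)
      _ ≤ _ := prob_step N g k n hg hnN
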